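/- Let π_prim and π_int be autoregressive policies on finite vocabulary V over horizon T, S a switching rule with mixed policy π_mix (equal to π_int when S(h)=1 and π_prim when S(h)=0), and let M = ½(P_mix + P_int), with α_t(h) = (P_mix)_{<t}(h)/((P_mix)_{<t}(h)+(P_int)_{<t}(h)). Suppose that for every t and prefix h with M_{<t}(h) > 0 and S(h)=0, the skew divergence satisfies D_JS^{α_t(h)}(π_prim(·|h) ‖ π_int(·|h)) ≤ ε. Then, with N_0 = Σ_{t=1}^T 1{S(X_{<t})=0}, JS(P_mix ‖ P_int) ≤ ε · E_{X ∼ M}[N_0] = (ε/2)( E_{P_mix}[N_0] + E_{P_int}[N_0] ). -/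

import Mathlib

open Finset

/-- KL divergence between two (finitely supported) mass functions, with the
convention `0 log 0 = 0`. -/
noncomputable def KL {X : Type*} [Fintype X] (μ ν : X → ℝ) : ℝ :=
  ∑ x, if μ x = 0 then 0 else μ x * Real.log (μ x / ν x)

/-- `μ` is a probability mass function on the finite type `X`. -/
def IsPMF {X : Type*} [Fintype X] (μ : X → ℝ) : Prop :=
  (∀ x, 0 ≤ μ x) ∧ ∑ x, μ x = 1

/-- Jensen–Shannon divergence. -/
noncomputable def JS {X : Type*} [Fintype X] (μ ν : X → ℝ) : ℝ :=
  (1/2) * KL μ (fun x => (μ x + ν x) / 2) + (1/2) * KL ν (fun x => (μ x + ν x) / 2)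

/-- Skew Jensen–Shannon divergence with skew parameter `α`. -/
noncomputable def skewJS {X : Type*} [Fintype X] (α : ℝ) (μ ν : X → ℝ) : ℝ :=
  α * KL μ (fun x => α * μ x + (1 - α) * ν x)
    + (1 - α) * KL ν (fun x => α * μ x + (1 - α) * ν x)

/-- The sequence-level distribution on `Fin T → V` induced by an autoregressive
family of conditionals `π t : (Fin t → V) → V → ℝ`. -/
noncomputable def seqProb {V : Type*} (π : (t : ℕ) → (Fin t → V) → V → ℝ) (T : ℕ)
    (x : Fin T → V) : ℝ :=
  ∏ t : Fin T, π t (fun i => x (Fin.castLE t.isLt.le i)) (x t)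

/-- The marginal of the prefix `X_{<t}` under a distribution `P` on `Fin T → V`. -/
noncomputable def prefixMarginal {V : Type*} [Fintype V] [DecidableEq V] {T : ℕ}
    (P : (Fin T → V) → ℝ) {t : ℕ} (ht : t ≤ T) (h : Fin t → V) : ℝ :=
  ∑ x ∈ Finset.univ.filter
      (fun x : Fin T → V => ∀ i : Fin t, x (Fin.castLE ht i) = h i), P x

/-! The midpoint `M = ½ (P_mix + P_int)` is itself autoregressive, with conditionals
`α_t(h) π_mix(·|h) + (1 - α_t(h)) π_int(·|h)`. The chain rule for `KL` between autoregressive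
laws therefore splits `JS (P_mix ‖ P_int) = ½ KL (P_mix ‖ M) + ½ KL (P_int ‖ M)` into
`∑_t E_{h ∼ M_{<t}} D_JS^{α_t(h)} (π_mix(·|h) ‖ π_int(·|h))`. Where `S h = 1` the two conditionals
coincide and the term vanishes; elsewhere it is at most `ε`, and the indicators add up to `N_0`. -/

theorem half_add_mul_mix {a b : ℝ} (ha : 0 ≤ a) (hb : 0 ≤ b) (p q : ℝ) :
    (a + b) / 2 * (a / (a + b) * p + (1 - a / (a + b)) * q) = (a * p + b * q) / 2 := by
  rcases (add_nonneg ha hb).eq_or_lt with hab | hab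
  · obtain ⟨rfl, rfl⟩ : a = 0 ∧ b = 0 := ⟨by linarith, by linarith⟩
    simp
  field_simp
  ring

section Autoregressive

variable {V : Type*}

theorem snoc_apply_castLE {n t : ℕ} (ht : t ≤ n) (h : Fin n → V) (v : V) (i : Fin t) :
    (Fin.snoc h v : Fin (n + 1) → V) (Fin.castLE (ht.trans n.le_succ) i) = h (Fin.castLE ht i) :=
  Fin.snoc_castSucc (α := fun _ => V) v h (Fin.castLE ht i)

theorem seqProb_zero (π : (t : ℕ) → (Fin t → V) → V → ℝ) (x : Fin 0 → V) :
    seqProb π 0 x = 1 :=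
  prod_empty

theorem seqProb_snoc (π : (t : ℕ) → (Fin t → V) → V → ℝ) {n : ℕ} (h : Fin n → V) (v : V) :
    seqProb π (n + 1) (Fin.snoc h v) = seqProb π n h * π n h v := by
  simp only [seqProb, Fin.prod_univ_castSucc, Fin.snoc_castSucc, Fin.snoc_last]
  congr 2
  · ext t
    congr 1
    funext i
    exact snoc_apply_castLE t.isLt.le h v i
  · funext i
    exact snoc_apply_castLE le_rfl h v i

theorem seqProb_nonneg {π : (t : ℕ) → (Fin t → V) → V → ℝ}
    (hπ : ∀ t h v, 0 ≤ π t h v) {n : ℕ} (x : Fin n → V) : 0 ≤ seqProb π n x :=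
  prod_nonneg fun _ _ => hπ _ _ _

/-- The paper's `α_t(h)`. -/
noncomputable def skewWeight (π σ : (t : ℕ) → (Fin t → V) → V → ℝ) (t : ℕ) (h : Fin t → V) :
    ℝ :=
  seqProb π t h / (seqProb π t h + seqProb σ t h)

noncomputable def midpointPolicy (π σ : (t : ℕ) → (Fin t → V) → V → ℝ) (t : ℕ)
    (h : Fin t → V) (v : V) : ℝ :=
  skewWeight π σ t h * π t h v + (1 - skewWeight π σ t h) * σ t h v

theorem seqProb_midpointPolicy {π σ : (t : ℕ) → (Fin t → V) → V → ℝ} (hπ : ∀ t h v, 0 ≤ π t h v) (hσ : ∀ t h v, 0 ≤ σ t h v) :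
    ∀ (T : ℕ) (x : Fin T → V),
      seqProb (midpointPolicy π σ) T x = (seqProb π T x + seqProb σ T x) / 2
  | 0, x => by simp [seqProb_zero]
  | T + 1, x => by
    rw [← Fin.snoc_init_self x]
    simp only [seqProb_snoc, seqProb_midpointPolicy hπ hσ T, midpointPolicy, skewWeight]
    exact half_add_mul_mix (seqProb_nonneg hπ _) (seqProb_nonneg hσ _) _ _

section Fintype

variable [Fintype V]

theorem sum_fin_succ_eq_sum_snoc {M : Type*} [AddCommMonoid M] {n : ℕ}
    (f : (Fin (n + 1) → V) → M) :
    ∑ x, f x = ∑ h : Fin n → V, ∑ v, f (Fin.snoc h v) := by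
  rw [← (Fin.snocEquiv fun _ => V).sum_comp f, Fintype.sum_prod_type, sum_comm]
  rfl

theorem sum_seqProb_mul_prefix {π : (t : ℕ) → (Fin t → V) → V → ℝ}
    (hπ : ∀ t h, ∑ v, π t h v = 1) {t : ℕ} (f : (Fin t → V) → ℝ) :
    ∀ T (ht : t ≤ T), ∑ x : Fin T → V, seqProb π T x * f (fun i => x (Fin.castLE ht i))
      = ∑ h : Fin t → V, seqProb π t h * f h := by
  intro T ht
  induction T, ht using Nat.le_induction with
  | base => rfl
  | succ T ht ih =>
    rw [sum_fin_succ_eq_sum_snoc, ← ih]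
    refine sum_congr rfl fun h _ => ?_
    have hprefix : ∀ v, (fun i => (Fin.snoc h v : Fin (T + 1) → V) (Fin.castLE (ht.trans T.le_succ) i))
        = fun i => h (Fin.castLE ht i) :=
      fun v => funext (snoc_apply_castLE ht h v)
    simp only [seqProb_snoc, hprefix, mul_right_comm _ _ (f _), ← mul_sum, hπ, mul_one]

theorem sum_seqProb_mul_sum_prefix {π : (t : ℕ) → (Fin t → V) → V → ℝ}
    (hπ : ∀ t h, ∑ v, π t h v = 1) (T : ℕ) (f : (t : ℕ) → (Fin t → V) → ℝ) :
    ∑ x : Fin T → V, seqProb π T x * ∑ t : Fin T, f t (fun i => x (Fin.castLE t.isLt.le i))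
      = ∑ t ∈ range T, ∑ h : Fin t → V, seqProb π t h * f t h := by
  simp only [mul_sum]
  rw [sum_comm, ← Fin.sum_univ_eq_sum_range (fun t => ∑ h : Fin t → V, seqProb π t h * f t h)]
  exact sum_congr rfl fun t _ => sum_seqProb_mul_prefix hπ (f t) T t.isLt.le

theorem prefixMarginal_seqProb [DecidableEq V] {π : (t : ℕ) → (Fin t → V) → V → ℝ}
    (hπ : ∀ t h, ∑ v, π t h v = 1) {T t : ℕ} (ht : t ≤ T) (h : Fin t → V) :
    prefixMarginal (seqProb π T) ht h = seqProb π t h := by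
  have := sum_seqProb_mul_prefix hπ (fun g => if g = h then (1 : ℝ) else 0) T ht
  simp only [mul_ite, mul_one, mul_zero, sum_ite_eq', mem_univ, if_true] at this
  rw [prefixMarginal, ← this, sum_filter]
  simp only [funext_iff]

theorem isPMF_midpointPolicy {π σ : (t : ℕ) → (Fin t → V) → V → ℝ} (hπ : ∀ t h, IsPMF (π t h))
    (hσ : ∀ t h, IsPMF (σ t h)) (t : ℕ) (h : Fin t → V) : IsPMF (midpointPolicy π σ t h) := by
  have ha := seqProb_nonneg (fun t h => (hπ t h).1) h
  have hb := seqProb_nonneg (fun t h => (hσ t h).1) h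
  have hα₀ : 0 ≤ skewWeight π σ t h := div_nonneg ha (add_nonneg ha hb)
  have hα₁ : skewWeight π σ t h ≤ 1 := div_le_one_of_le₀ (le_add_of_nonneg_right hb) (add_nonneg ha hb)
  refine ⟨fun v => ?_, ?_⟩
  · exact add_nonneg (mul_nonneg hα₀ ((hπ t h).1 v)) (mul_nonneg (sub_nonneg.2 hα₁) ((hσ t h).1 v))
  · simp only [midpointPolicy, sum_add_distrib, ← mul_sum, (hπ t h).2, (hσ t h).2]
    ring

end Fintype

end Autoregressive

section Divergence

variable {X : Type*} [Fintype X]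

noncomputable def klTerm (a b : ℝ) : ℝ :=
  if a = 0 then 0 else a * Real.log (a / b)

theorem KL_eq_sum_klTerm (μ ν : X → ℝ) : KL μ ν = ∑ x, klTerm (μ x) (ν x) := rfl

theorem klTerm_mul {a b c d : ℝ} (ha : 0 ≤ a) (hc : 0 ≤ c) (hd : 0 ≤ d)
    (hac : 0 < a * c → 0 < b * d) :
    klTerm (a * c) (b * d) = c * klTerm a b + a * klTerm c d := by
  rcases ha.eq_or_lt with rfl | ha
  · simp [klTerm]
  rcases hc.eq_or_lt with rfl | hc
  · simp [klTerm]
  have hbd := hac (mul_pos ha hc)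
  have hb : 0 < b := pos_of_mul_pos_left hbd hd
  have hd : 0 < d := pos_of_mul_pos_right hbd hb.le
  rw [klTerm, klTerm, klTerm, if_neg (by positivity), if_neg ha.ne', if_neg hc.ne',
    mul_div_mul_comm, Real.log_mul (by positivity) (by positivity)]
  ring

theorem KL_self (μ : X → ℝ) : KL μ μ = 0 :=
  sum_eq_zero fun x _ => by
    by_cases hx : μ x = 0 <;> simp [hx]

theorem skewJS_self (α : ℝ) (μ : X → ℝ) : skewJS α μ μ = 0 := by
  simp [skewJS, ← add_mul, KL_self]

theorem half_mul_KL_add_half_mul_KL {a b : ℝ} (ha : 0 ≤ a) (hb : 0 ≤ b) (μ ν : X → ℝ) :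
    a / 2 * KL μ (fun x => a / (a + b) * μ x + (1 - a / (a + b)) * ν x)
      + b / 2 * KL ν (fun x => a / (a + b) * μ x + (1 - a / (a + b)) * ν x)
      = (a + b) / 2 * skewJS (a / (a + b)) μ ν := by
  rcases (add_nonneg ha hb).eq_or_lt with hab | hab
  · obtain ⟨rfl, rfl⟩ : a = 0 ∧ b = 0 := ⟨by linarith, by linarith⟩
    simp
  have h1 : 1 - a / (a + b) = b / (a + b) := by field_simp; ring
  rw [skewJS, h1]
  field_simp

end Divergence

section ChainRule

variable {V : Type*} [Fintype V]

theorem KL_seqProb {π ρ : (t : ℕ) → (Fin t → V) → V → ℝ} (hπ : ∀ t h, IsPMF (π t h))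
    (hρ : ∀ t h v, 0 ≤ ρ t h v)
    (hac : ∀ t (x : Fin t → V), 0 < seqProb π t x → 0 < seqProb ρ t x) (T : ℕ) :
    KL (seqProb π T) (seqProb ρ T)
      = ∑ t ∈ range T, ∑ h : Fin t → V, seqProb π t h * KL (π t h) (ρ t h) := by
  induction T with
  | zero => simp [KL_eq_sum_klTerm, seqProb_zero, klTerm]
  | succ T ih =>
    have hstep : ∀ (h : Fin T → V) (v : V),
        klTerm (seqProb π (T + 1) (Fin.snoc h v)) (seqProb ρ (T + 1) (Fin.snoc h v))
          = π T h v * klTerm (seqProb π T h) (seqProb ρ T h)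
            + seqProb π T h * klTerm (π T h v) (ρ T h v) := fun h v => by
      rw [seqProb_snoc, seqProb_snoc]
      refine klTerm_mul (seqProb_nonneg (fun t h => (hπ t h).1) h) ((hπ T h).1 v) (hρ T h v)
        fun hpos => ?_
      simpa only [seqProb_snoc] using hac (T + 1) (Fin.snoc h v) (by rwa [seqProb_snoc])
    rw [KL_eq_sum_klTerm, sum_fin_succ_eq_sum_snoc, sum_range_succ, ← ih, KL_eq_sum_klTerm]
    simp only [hstep, sum_add_distrib, ← sum_mul, (hπ _ _).2, one_mul, ← mul_sum,
      KL_eq_sum_klTerm]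

theorem JS_seqProb {π σ : (t : ℕ) → (Fin t → V) → V → ℝ}
    (hπ : ∀ t h, IsPMF (π t h)) (hσ : ∀ t h, IsPMF (σ t h)) (T : ℕ) :
    JS (seqProb π T) (seqProb σ T)
      = ∑ t ∈ range T, ∑ h : Fin t → V,
          seqProb (midpointPolicy π σ) t h * skewJS (skewWeight π σ t h) (π t h) (σ t h) := by
  have hπ₀ : ∀ t h v, 0 ≤ π t h v := fun t h => (hπ t h).1
  have hσ₀ : ∀ t h v, 0 ≤ σ t h v := fun t h => (hσ t h).1
  have hρ₀ : ∀ t h v, 0 ≤ midpointPolicy π σ t h v := fun t h => (isPMF_midpointPolicy hπ hσ t h).1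
  have hM := seqProb_midpointPolicy hπ₀ hσ₀
  have hM_eq : (fun x => (seqProb π T x + seqProb σ T x) / 2) = seqProb (midpointPolicy π σ) T :=
    funext fun x => (hM T x).symm
  have hacπ : ∀ t (x : Fin t → V), 0 < seqProb π t x → 0 < seqProb (midpointPolicy π σ) t x :=
    fun t x hx => by rw [hM]; linarith [seqProb_nonneg hσ₀ x]
  have hacσ : ∀ t (x : Fin t → V), 0 < seqProb σ t x → 0 < seqProb (midpointPolicy π σ) t x :=
    fun t x hx => by rw [hM]; linarith [seqProb_nonneg hπ₀ x]
  rw [JS, hM_eq, KL_seqProb hπ hρ₀ hacπ, KL_seqProb hσ hρ₀ hacσ, mul_sum, mul_sum,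
    ← sum_add_distrib]
  refine sum_congr rfl fun t _ => ?_
  rw [mul_sum, mul_sum, ← sum_add_distrib]
  refine sum_congr rfl fun h _ => ?_
  rw [hM]
  unfold midpointPolicy skewWeight
  rw [← half_mul_KL_add_half_mul_KL (seqProb_nonneg hπ₀ h) (seqProb_nonneg hσ₀ h)]
  ring

theorem JS_seqProb_le {π σ : (t : ℕ) → (Fin t → V) → V → ℝ} (hπ : ∀ t h, IsPMF (π t h))
    (hσ : ∀ t h, IsPMF (σ t h)) {T : ℕ} (w : (t : ℕ) → (Fin t → V) → ℝ)
    (hw : ∀ t < T, ∀ h : Fin t → V, 0 < seqProb (midpointPolicy π σ) t h →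
      skewJS (skewWeight π σ t h) (π t h) (σ t h) ≤ w t h) :
    JS (seqProb π T) (seqProb σ T)
      ≤ ∑ x : Fin T → V, seqProb (midpointPolicy π σ) T x *
          ∑ t : Fin T, w t (fun i => x (Fin.castLE t.isLt.le i)) := by
  have hρ := isPMF_midpointPolicy hπ hσ
  rw [JS_seqProb hπ hσ, sum_seqProb_mul_sum_prefix (fun t h => (hρ t h).2)]
  refine sum_le_sum fun t ht => sum_le_sum fun h _ => ?_
  rcases (seqProb_nonneg (fun t h => (hρ t h).1) h).eq_or_lt with hzero | hpos
  · simp [← hzero]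
  · exact mul_le_mul_of_nonneg_left (hw t (mem_range.mp ht) h hpos) hpos.le

end ChainRule

theorem js_eps_bound_general {V : Type*} [Fintype V] [DecidableEq V] (T : ℕ)
    (πprim πint : (t : ℕ) → (Fin t → V) → V → ℝ)
    (S : (t : ℕ) → (Fin t → V) → Bool)
    (hprim : ∀ (t : ℕ) (h : Fin t → V), IsPMF (πprim t h))
    (hint : ∀ (t : ℕ) (h : Fin t → V), IsPMF (πint t h))
    (ε : ℝ)
    (hskew : ∀ (t : ℕ) (ht : t < T) (h : Fin t → V),
      0 < prefixMarginal
            (fun x => (seqProb (fun t h => if S t h then πint t h else πprim t h) T x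
                        + seqProb πint T x) / 2) ht.le h →
      S t h = false →
      skewJS
        (prefixMarginal (seqProb (fun t h => if S t h then πint t h else πprim t h) T)
            ht.le h /
          (prefixMarginal (seqProb (fun t h => if S t h then πint t h else πprim t h) T)
              ht.le h
            + prefixMarginal (seqProb πint T) ht.le h))
        (πprim t h) (πint t h) ≤ ε) :
    JS (seqProb (fun t h => if S t h then πint t h else πprim t h) T) (seqProb πint T)
      ≤ ε * ∑ x : Fin T → V,
          ((seqProb (fun t h => if S t h then πint t h else πprim t h) T x
              + seqProb πint T x) / 2) *
            ∑ t : Fin T,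
              (if S t (fun i => x (Fin.castLE t.isLt.le i)) then (0 : ℝ) else 1) ∧
    ε * ∑ x : Fin T → V,
          ((seqProb (fun t h => if S t h then πint t h else πprim t h) T x
              + seqProb πint T x) / 2) *
            ∑ t : Fin T,
              (if S t (fun i => x (Fin.castLE t.isLt.le i)) then (0 : ℝ) else 1)
      = (ε / 2) *
          ((∑ x : Fin T → V,
              seqProb (fun t h => if S t h then πint t h else πprim t h) T x *
                ∑ t : Fin T,
                  (if S t (fun i => x (Fin.castLE t.isLt.le i)) then (0 : ℝ) else 1))
            + ∑ x : Fin T → V,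
                seqProb πint T x *
                  ∑ t : Fin T,
                    (if S t (fun i => x (Fin.castLE t.isLt.le i)) then (0 : ℝ) else 1)) := by
  set πmix : (t : ℕ) → (Fin t → V) → V → ℝ := fun t h => if S t h then πint t h else πprim t h
  have hmix : ∀ t h, IsPMF (πmix t h) := fun t h => by
    by_cases hS : S t h <;> simp [πmix, hS, hprim, hint]
  have hM := seqProb_midpointPolicy (fun t h => (hmix t h).1) (fun t h => (hint t h).1)
  simp only [← hM, prefixMarginal_seqProb (fun t h => (hmix t h).2),
    prefixMarginal_seqProb (fun t h => (hint t h).2),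
    prefixMarginal_seqProb (fun t h => (isPMF_midpointPolicy hmix hint t h).2)] at hskew
  refine ⟨?_, ?_⟩
  · refine (JS_seqProb_le hmix hint (fun t h => ε * if S t h then 0 else 1) ?_).trans_eq
      (by simp only [← hM, mul_sum, mul_left_comm ε])
    intro t ht h hpos
    cases hS : S t h
    · have hprim_eq : πprim t h = πmix t h := by simp [πmix, hS]
      simpa [hprim_eq, skewWeight] using hskew t ht h hpos hS
    · have hmix_eq : πmix t h = πint t h := by simp [πmix, hS]
      simp [hmix_eq, skewJS_self]
  · rw [← sum_add_distrib, mul_sum, mul_sum]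
    exact sum_congr rfl fun x _ => by ring

/-- Token-level skew-JS control implies a sequence-level JS bound for the mixed policy. -/
theorem js_eps_bound {V : Type*} [Fintype V] [DecidableEq V] (T : ℕ)
    (πprim πint : (t : ℕ) → (Fin t → V) → V → ℝ)
    (S : (t : ℕ) → (Fin t → V) → Bool)
    (hprim : ∀ (t : ℕ) (h : Fin t → V), IsPMF (πprim t h))
    (hint : ∀ (t : ℕ) (h : Fin t → V), IsPMF (πint t h))
    (ε : ℝ) (hε : 0 ≤ ε)
    (hskew : ∀ (t : ℕ) (ht : t < T) (h : Fin t → V),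
      0 < prefixMarginal
            (fun x => (seqProb (fun t h => if S t h then πint t h else πprim t h) T x
                        + seqProb πint T x) / 2) ht.le h →
      S t h = false →
      skewJS
        (prefixMarginal (seqProb (fun t h => if S t h then πint t h else πprim t h) T)
            ht.le h /
          (prefixMarginal (seqProb (fun t h => if S t h then πint t h else πprim t h) T)
              ht.le h
            + prefixMarginal (seqProb πint T) ht.le h))
        (πprim t h) (πint t h) ≤ ε) :
    JS (seqProb (fun t h => if S t h then πint t h else πprim t h) T) (seqProb πint T)
      ≤ ε * ∑ x : Fin T → V,
          ((seqProb (fun t h => if S t h then πint t h else πprim t h) T x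
              + seqProb πint T x) / 2) *
            ∑ t : Fin T,
              (if S t (fun i => x (Fin.castLE t.isLt.le i)) then (0 : ℝ) else 1) ∧
    ε * ∑ x : Fin T → V,
          ((seqProb (fun t h => if S t h then πint t h else πprim t h) T x
              + seqProb πint T x) / 2) *
            ∑ t : Fin T,
              (if S t (fun i => x (Fin.castLE t.isLt.le i)) then (0 : ℝ) else 1)
      = (ε / 2) *
          ((∑ x : Fin T → V,
              seqProb (fun t h => if S t h then πint t h else πprim t h) T x *
                ∑ t : Fin T,
                  (if S t (fun i => x (Fin.castLE t.isLt.le i)) then (0 : ℝ) else 1))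
            + ∑ x : Fin T → V,
                seqProb πint T x *
                  ∑ t : Fin T,
                    (if S t (fun i => x (Fin.castLE t.isLt.le i)) then (0 : ℝ) else 1)) :=
  js_eps_bound_general T πprim πint S hprim hint ε hskew
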